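/- The sum over all a,b,c,d ∈ ℤ_{≥0} with a ≥ 1, ad − bc = 1 of 1/(4(a+c)(b+d)(a+b+c+d)) converges and equals 1/2. -/
import Mathlib

open Filter

/-- The index type: matrices `(a,b;c,d)` of naturals with `a ≥ 1` and `ad = bc + 1`. -/
abbrev SB := {x : ℕ × ℕ × ℕ × ℕ // 1 ≤ x.1 ∧ x.1 * x.2.2.2 = x.2.1 * x.2.2.1 + 1}

/-- The summand. -/
noncomputable def tf (x : SB) : ℝ :=
  1 / (4 * ((x.val.1 : ℝ) + x.val.2.2.1) * ((x.val.2.1 : ℝ) + x.val.2.2.2) *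
      ((x.val.1 : ℝ) + x.val.2.1 + x.val.2.2.1 + x.val.2.2.2))

lemma SB.d_pos (x : SB) : 1 ≤ x.1.2.2.2 := by
  obtain ⟨⟨a, b, c, d⟩, h1, h2⟩ := x
  rcases Nat.eq_zero_or_pos d with h | h
  · subst h; rw [mul_zero] at h2; exact absurd h2.symm (Nat.succ_ne_zero _)
  · exact h

/-- Basic telescoping sum. -/
lemma tele {v w : ℝ} (hv : 0 < v) (hw : 0 < w) :
    HasSum (fun k : ℕ => 1 / (4 * w * (v + k * w) * (v + k * w + w)))
      (1 / (4 * w * w * v)) := by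
  have hpos : ∀ k : ℕ, (0:ℝ) < v + k * w := fun k => by positivity
  rw [hasSum_iff_tendsto_nat_of_nonneg (fun i => by positivity)]
  have key : ∀ n : ℕ, ∑ i ∈ Finset.range n, 1 / (4 * w * (v + i * w) * (v + i * w + w)) =
      1 / (4 * w * w * v) - 1 / (4 * w * w * (v + n * w)) := by
    intro n
    induction n with
    | zero => simp
    | succ n ih =>
      rw [Finset.sum_range_succ, ih]
      have h1 := hpos n
      have h2 := hpos (n + 1)
      push_cast at h2 ⊢
      field_simp
      ring
  have hlim : Tendsto (fun n : ℕ => 4 * w * w * (v + n * w)) atTop atTop := by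
    apply Tendsto.const_mul_atTop (by positivity : (0:ℝ) < 4 * w * w)
    exact tendsto_atTop_add_const_left _ v
      (Tendsto.atTop_mul_const hw tendsto_natCast_atTop_atTop)
  have hlim2 : Tendsto (fun n : ℕ => 1 / (4 * w * w * (v + n * w))) atTop (nhds 0) := by
    have h0 := hlim.inv_tendsto_atTop
    have he : (fun n : ℕ => 4 * w * w * (v + n * w))⁻¹ =
        fun n : ℕ => 1 / (4 * w * w * (v + n * w)) := by
      funext n; rw [Pi.inv_apply, one_div]
    rwa [he] at h0
  have hfin := (tendsto_const_nhds (x := 1 / (4 * w * w * v)) (f := atTop (α := ℕ))).sub hlim2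
  rw [sub_zero] at hfin
  exact Tendsto.congr (fun n => (key n).symm) hfin

/-- The involution `(a,b,c,d) ↦ (d,c,b,a)`, swapping `a+c` with `b+d`. -/
def sigmaSB : SB ≃ SB where
  toFun x := ⟨(x.1.2.2.2, x.1.2.2.1, x.1.2.1, x.1.1),
    ⟨x.d_pos, by
      have h := x.2.2
      dsimp only
      rw [mul_comm, mul_comm x.1.2.2.1 x.1.2.1]
      exact h⟩⟩
  invFun x := ⟨(x.1.2.2.2, x.1.2.2.1, x.1.2.1, x.1.1),
    ⟨x.d_pos, by
      have h := x.2.2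
      dsimp only
      rw [mul_comm, mul_comm x.1.2.2.1 x.1.2.1]
      exact h⟩⟩
  left_inv x := Subtype.ext rfl
  right_inv x := Subtype.ext rfl

/-- The map `(M, k) ↦ M · L · Rᵏ`. -/
def mSB (p : SB × ℕ) : SB :=
  ⟨(p.1.1.1 + p.1.1.2.1,
    p.1.1.2.1 + p.2 * (p.1.1.1 + p.1.1.2.1),
    p.1.1.2.2.1 + p.1.1.2.2.2,
    p.1.1.2.2.2 + p.2 * (p.1.1.2.2.1 + p.1.1.2.2.2)), by
      obtain ⟨⟨⟨a, b, c, d⟩, h1, h2⟩, k⟩ := p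
      dsimp only
      constructor
      · omega
      · zify at h2 ⊢
        linear_combination h2⟩

/-- The set of matrices with `c = 0`. -/
def S0 : Set SB := {x | x.1.2.2.1 = 0}

/-- `ℕ → S0`, `k ↦ (1,k,0,1)`. -/
def nmap (k : ℕ) : SB := ⟨(1, k, 0, 1), by constructor <;> simp⟩

lemma nmap_mem (k : ℕ) : nmap k ∈ S0 := rfl

lemma nmap_bij : Function.Bijective (fun k => (⟨nmap k, nmap_mem k⟩ : S0)) := by
  constructor
  · intro k k' h
    have h2 := congrArg (fun z : S0 => z.1.1.2.1) h
    simpa [nmap] using h2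
  · rintro ⟨⟨⟨a, b, c, d⟩, h1, h2⟩, hc⟩
    have hc' : c = 0 := hc
    subst hc'
    rw [mul_zero] at h2
    have ha : a = 1 := Nat.eq_one_of_mul_eq_one_right h2
    have hd : d = 1 := Nat.eq_one_of_mul_eq_one_left h2
    subst ha; subst hd
    exact ⟨b, rfl⟩

lemma mSB_mem (p : SB × ℕ) : mSB p ∈ S0ᶜ := by
  obtain ⟨⟨⟨a, b, c, d⟩, h1, h2⟩, k⟩ := p
  have : 1 ≤ d := SB.d_pos ⟨(a, b, c, d), h1, h2⟩
  simp only [mSB, S0, Set.mem_compl_iff, Set.mem_setOf_eq]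
  omega

lemma mSB_inj : Function.Injective mSB := by
  rintro ⟨⟨⟨a, b, c, d⟩, h1, h2⟩, k⟩ ⟨⟨⟨a', b', c', d'⟩, h1', h2'⟩, k'⟩ h
  simp only [mSB, Subtype.mk.injEq, Prod.mk.injEq] at h
  obtain ⟨e1, e2, e3, e4⟩ := h
  have hA : 0 < a + b := by omega
  have hb : b < a + b := by omega
  have hb' : b' < a + b := by omega
  have hk : k = k' ∧ b = b' := by
    rw [← e1] at e2
    have hm : (b + k * (a + b)) % (a + b) = (b' + k' * (a + b)) % (a + b) := by rw [e2]
    rw [Nat.add_mul_mod_self_right, Nat.add_mul_mod_self_right,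
      Nat.mod_eq_of_lt hb, Nat.mod_eq_of_lt hb'] at hm
    refine ⟨?_, hm⟩
    have hmul : k * (a + b) = k' * (a + b) := by omega
    exact Nat.eq_of_mul_eq_mul_right hA hmul
  obtain ⟨hkk, hbb⟩ := hk
  subst hkk; subst hbb
  have ha : a = a' := by omega
  have hd : d = d' := by
    rw [← e3] at e4
    omega
  have hc : c = c' := by omega
  subst ha; subst hd; subst hc
  rfl

lemma mSB_surj : ∀ x ∈ S0ᶜ, ∃ p : SB × ℕ, mSB p = x := by
  rintro ⟨⟨A, B, C, D⟩, hA, hdet⟩ hx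
  have hA' : 1 ≤ A := hA
  have hdet' : A * D = B * C + 1 := hdet
  have hC : 1 ≤ C := by
    have : ¬ ((⟨(A, B, C, D), hA, hdet⟩ : SB) ∈ S0) := hx
    have hne : C ≠ 0 := this
    omega
  obtain ⟨k, r, hrA, hBr⟩ : ∃ k r, r < A ∧ A * k + r = B :=
    ⟨B / A, B % A, Nat.mod_lt _ (by omega), Nat.div_add_mod B A⟩
  have h1 : A * D = A * (k * C) + (r * C + 1) := by
    have hBC : B * C = A * (k * C) + r * C := by rw [← hBr]; ring
    omega
  have hDk : k * C ≤ D := by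
    have hle : A * (k * C) ≤ A * D := by omega
    exact Nat.le_of_mul_le_mul_left hle (by omega)
  obtain ⟨dd, hddD⟩ : ∃ dd, dd + k * C = D := ⟨D - k * C, by omega⟩
  have hAd : A * dd = r * C + 1 := by
    have hmul : A * (dd + k * C) = A * D := by rw [hddD]
    rw [mul_add] at hmul
    omega
  have hd1 : 1 ≤ dd := by
    rcases Nat.eq_zero_or_pos dd with h | h
    · rw [h, mul_zero] at hAd; omega
    · exact h
  have hdC : dd ≤ C := by
    have h2 : r * C + 1 ≤ A * C := by
      have h3 : (r + 1) * C ≤ A * C := Nat.mul_le_mul_right C (by omega)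
      have h4 : (r + 1) * C = r * C + C := by ring
      omega
    have h5 : A * dd ≤ A * C := by omega
    exact Nat.le_of_mul_le_mul_left h5 (by omega)
  have hdetM : (A - r) * dd = r * (C - dd) + 1 := by
    have e1 : (A - r) * dd + r * dd = A * dd := by
      rw [← add_mul]; congr 1; omega
    have e2 : r * (C - dd) + r * dd = r * C := by
      rw [← mul_add]; congr 1; omega
    omega
  refine ⟨⟨⟨(A - r, r, C - dd, dd), ⟨by omega, hdetM⟩⟩, k⟩, ?_⟩
  apply Subtype.ext
  simp only [mSB]
  have c1 : A - r + r = A := by omega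
  have c3 : C - dd + dd = C := by omega
  rw [c1, c3]
  have c2 : r + k * A = B := by
    have := mul_comm k A
    omega
  have c4 : dd + k * C = D := hddD
  rw [c2, c4]

/-- Injection used for summability: `M ↦ (a+c, b+d)`. -/
def iota (x : SB) : ℕ × ℕ := (x.1.1 + x.1.2.2.1, x.1.2.1 + x.1.2.2.2)

lemma key_id (x : SB) : x.1.1 * (x.1.2.1 + x.1.2.2.2) = x.1.2.1 * (x.1.1 + x.1.2.2.1) + 1 := by
  obtain ⟨⟨a, b, c, d⟩, h1, h2⟩ := x
  dsimp only at h1 h2 ⊢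
  have e1 : a * (b + d) = a * b + a * d := by ring
  have e2 : b * (a + c) = a * b + b * c := by ring
  omega

lemma iota_inj : Function.Injective iota := by
  intro x x' h
  have k1 := key_id x
  have k2 := key_id x'
  obtain ⟨⟨a, b, c, d⟩, h1, h2⟩ := x
  obtain ⟨⟨a', b', c', d'⟩, h1', h2'⟩ := x'
  simp only [iota, Prod.mk.injEq] at h
  obtain ⟨hU, hV⟩ := h
  dsimp only at hU hV k1 k2 h1 h1' h2 h2'
  rw [← hU, ← hV] at k2
  -- k1 : a * (b+d) = b * (a+c) + 1, k2 : a' * (b+d) = b' * (a+c) + 1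
  have hcop : IsCoprime ((a:ℤ) + c) ((b:ℤ) + d) := by
    refine ⟨-(b : ℤ), (a : ℤ), ?_⟩
    have k1' : (a : ℤ) * ((b:ℤ) + d) = (b:ℤ) * ((a:ℤ) + c) + 1 := by exact_mod_cast k1
    linarith
  have hdvd : ((a:ℤ) + c) ∣ ((a : ℤ) - a') := by
    apply hcop.dvd_of_dvd_mul_right
    have hh : ((a : ℤ) - a') * ((b:ℤ) + d) = ((b : ℤ) - b') * ((a:ℤ) + c) := by
      have k1' : (a : ℤ) * ((b:ℤ) + d) = (b:ℤ) * ((a:ℤ) + c) + 1 := by exact_mod_cast k1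
      have k2' : (a' : ℤ) * ((b:ℤ) + d) = (b':ℤ) * ((a:ℤ) + c) + 1 := by exact_mod_cast k2
      linarith
    rw [hh]; exact dvd_mul_left _ _
  have haU : a ≤ a + c := by omega
  have ha'U : a' ≤ a + c := by
    have : a' ≤ a' + c' := by omega
    omega
  have haa : a = a' := by
    obtain ⟨t, ht⟩ := hdvd
    have hU1 : (1 : ℤ) ≤ (a:ℤ) + c := by
      have : (1:ℤ) ≤ (a:ℤ) := by exact_mod_cast h1
      have : (0:ℤ) ≤ (c:ℤ) := by positivity
      linarith
    have hb1 : ((a : ℤ) - a') < (a:ℤ) + c := by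
      have t1 : (1 : ℤ) ≤ (a':ℤ) := by exact_mod_cast h1'
      have t2 : (a : ℤ) ≤ (a:ℤ) + c := by exact_mod_cast haU
      linarith
    have hb2 : -((a:ℤ) + c) < ((a : ℤ) - a') := by
      have t1 : (1 : ℤ) ≤ (a:ℤ) := by exact_mod_cast h1
      have t2 : (a' : ℤ) ≤ (a:ℤ) + c := by exact_mod_cast ha'U
      linarith
    have ht0 : t = 0 := by
      by_contra ht0
      rcases lt_or_gt_of_ne ht0 with hlt | hgt
      · have : t ≤ -1 := by omega
        nlinarith
      · have : 1 ≤ t := by omega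
        nlinarith
    have : (a : ℤ) = a' := by rw [ht0, mul_zero] at ht; omega
    exact_mod_cast this
  subst haa
  have hbb : b = b' := by
    have hh : b * (a + c) = b' * (a + c) := by omega
    exact Nat.eq_of_mul_eq_mul_right (by omega) hh
  subst hbb
  have hcc : c = c' := by omega
  have hdd : d = d' := by omega
  subst hcc; subst hdd
  rfl

set_option maxHeartbeats 1000000 in
lemma summable_tf : Summable tf := by
  classical
  have hs : Summable (fun n : ℕ => 1 / Real.sqrt n ^ 3) := by
    have h0 : Summable (fun n : ℕ => 1 / (n : ℝ) ^ ((3 : ℝ) / 2)) :=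
      Real.summable_one_div_nat_rpow.mpr (by norm_num)
    apply h0.congr
    intro n
    rw [Real.sqrt_eq_rpow, ← Real.rpow_natCast ((n : ℝ) ^ ((1 : ℝ) / 2)) 3,
      ← Real.rpow_mul (Nat.cast_nonneg n)]
    norm_num
  have hG : Summable (fun p : ℕ × ℕ =>
      (1 / Real.sqrt p.1 ^ 3) * (1 / Real.sqrt p.2 ^ 3)) :=
    hs.mul_of_nonneg hs (fun n => by positivity) (fun n => by positivity)
  have hF : Summable (fun p : ℕ × ℕ =>
      1 / (4 * (p.1 : ℝ) * p.2 * ((p.1 : ℝ) + p.2))) := by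
    apply Summable.of_nonneg_of_le (fun p => by positivity) _ hG
    rintro ⟨u, v⟩
    rcases Nat.eq_zero_or_pos u with hu | hu
    · subst hu; simp
    rcases Nat.eq_zero_or_pos v with hv | hv
    · subst hv; simp
    have hu1 : (1 : ℝ) ≤ u := by exact_mod_cast hu
    have hv1 : (1 : ℝ) ≤ v := by exact_mod_cast hv
    set x := Real.sqrt u with hx
    set y := Real.sqrt v with hy
    have hx2 : x * x = u := Real.mul_self_sqrt (by positivity)
    have hy2 : y * y = v := Real.mul_self_sqrt (by positivity)
    have hx1 : 1 ≤ x := by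
      rw [hx, show (1:ℝ) = Real.sqrt 1 by simp]; exact Real.sqrt_le_sqrt hu1
    have hy1 : 1 ≤ y := by
      rw [hy, show (1:ℝ) = Real.sqrt 1 by simp]; exact Real.sqrt_le_sqrt hv1
    dsimp only
    rw [div_mul_div_comm, one_mul, div_le_div_iff₀ (by positivity) (by positivity)]
    have hxy : x * y ≤ (u:ℝ) + v := by nlinarith [sq_nonneg (x - y)]
    have hkey : x ^ 3 * y ^ 3 = (u:ℝ) * v * (x * y) := by
      rw [← hx2, ← hy2]; ring
    have h6 : (u:ℝ) * v * (x * y) ≤ (u:ℝ) * v * ((u:ℝ) + v) := by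
      apply mul_le_mul_of_nonneg_left hxy
      positivity
    have h7 : (0:ℝ) ≤ (u:ℝ) * v * ((u:ℝ) + v) := by positivity
    nlinarith
  have hcomp := hF.comp_injective iota_inj
  apply hcomp.congr
  rintro ⟨⟨a, b, c, d⟩, h1, h2⟩
  simp only [Function.comp_apply, iota, tf]
  push_cast
  ring_nf

theorem sum_parabola_linear :
    HasSum (fun x : {x : ℕ × ℕ × ℕ × ℕ //
        1 ≤ x.1 ∧ x.1 * x.2.2.2 = x.2.1 * x.2.2.1 + 1} =>
      1 / (4 * ((x.val.1 : ℝ) + x.val.2.2.1) * ((x.val.2.1 : ℝ) + x.val.2.2.2) *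
        ((x.val.1 : ℝ) + x.val.2.1 + x.val.2.2.1 + x.val.2.2.2))) (1 / 2) := by
  classical
  set s : SB → ℝ := fun M =>
    1 / (4 * (((M.1.1 : ℝ) + M.1.2.1) + ((M.1.2.2.1 : ℝ) + M.1.2.2.2)) *
        (((M.1.1 : ℝ) + M.1.2.1) + ((M.1.2.2.1 : ℝ) + M.1.2.2.2)) *
        ((M.1.2.1 : ℝ) + M.1.2.2.2)) with hs_def
  have hsum_prod : Summable (tf ∘ mSB) := Summable.comp_injective summable_tf mSB_inj
  have hfiber : ∀ M : SB, HasSum (fun k : ℕ => (tf ∘ mSB) (M, k)) (s M) := by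
    rintro ⟨⟨a, b, c, d⟩, h1, h2⟩
    have hd : 1 ≤ d := SB.d_pos ⟨(a, b, c, d), h1, h2⟩
    have hdr : (1:ℝ) ≤ (d : ℝ) := by exact_mod_cast hd
    have har : (1:ℝ) ≤ (a : ℝ) := by exact_mod_cast h1
    have hbr : (0:ℝ) ≤ (b : ℝ) := Nat.cast_nonneg b
    have hcr : (0:ℝ) ≤ (c : ℝ) := Nat.cast_nonneg c
    have hv : (0:ℝ) < (b : ℝ) + d := by linarith
    have hw : (0:ℝ) < (a : ℝ) + b + c + d := by linarith
    have htele := tele hv hw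
    have heq : (fun k : ℕ => (tf ∘ mSB) (⟨(a, b, c, d), h1, h2⟩, k)) =
        (fun k : ℕ => 1 / (4 * ((a : ℝ) + b + c + d) *
          (((b : ℝ) + d) + k * ((a : ℝ) + b + c + d)) *
          (((b : ℝ) + d) + k * ((a : ℝ) + b + c + d) + ((a : ℝ) + b + c + d)))) := by
      funext k
      simp only [Function.comp_apply, mSB, tf]
      push_cast
      ring_nf
    rw [heq]
    have hval : s ⟨(a, b, c, d), h1, h2⟩ =
        1 / (4 * ((a : ℝ) + b + c + d) * ((a : ℝ) + b + c + d) * ((b : ℝ) + d)) := by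
      rw [hs_def]
      push_cast
      ring_nf
    rw [hval]
    exact htele
  have hprod : HasSum (tf ∘ mSB) (∑' p, (tf ∘ mSB) p) := hsum_prod.hasSum
  set Sv : ℝ := ∑' p, (tf ∘ mSB) p with hSv
  have hs_sum : HasSum s Sv := hprod.prod_fiberwise hfiber
  have hSc : HasSum (tf ∘ (Subtype.val : ↥(S0ᶜ) → SB)) Sv := by
    have hbij : Function.Bijective (fun p : SB × ℕ => (⟨mSB p, mSB_mem p⟩ : ↥(S0ᶜ))) := by
      constructor
      · intro p p' h
        exact mSB_inj (congrArg Subtype.val h)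
      · rintro ⟨x, hx⟩
        obtain ⟨p, hp⟩ := mSB_surj x hx
        exact ⟨p, Subtype.ext hp⟩
    rw [← (Equiv.ofBijective _ hbij).hasSum_iff]
    exact hprod
  have hS0 : HasSum (tf ∘ (Subtype.val : ↥S0 → SB)) (1/4) := by
    rw [← (Equiv.ofBijective _ nmap_bij).hasSum_iff]
    have htele := tele (one_pos : (0:ℝ) < 1) (one_pos : (0:ℝ) < 1)
    have heq : ((tf ∘ (Subtype.val : ↥S0 → SB)) ∘ ⇑(Equiv.ofBijective _ nmap_bij)) =
        (fun k : ℕ => 1 / (4 * (1:ℝ) * (1 + k * 1) * (1 + k * 1 + 1))) := by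
      funext k
      simp only [Equiv.ofBijective_apply, Function.comp_apply, nmap, tf]
      push_cast
      ring_nf
    rw [heq]
    have hv : (1:ℝ) / (4 * 1 * 1 * 1) = 1/4 := by norm_num
    rw [← hv]
    exact htele
  have htotal : HasSum tf (1/4 + Sv) :=
    HasSum.add_isCompl isCompl_compl hS0 hSc
  have hs' : HasSum (s ∘ sigmaSB) Sv := sigmaSB.hasSum_iff.mpr hs_sum
  have hadd : HasSum (fun M => s M + (s ∘ sigmaSB) M) (Sv + Sv) := hs_sum.add hs'
  have hts : HasSum tf (Sv + Sv) := by
    have heq : (fun M => s M + (s ∘ sigmaSB) M) = tf := by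
      funext M
      obtain ⟨⟨a, b, c, d⟩, h1, h2⟩ := M
      have hd : 1 ≤ d := SB.d_pos ⟨(a, b, c, d), h1, h2⟩
      have hdr : (1:ℝ) ≤ (d : ℝ) := by exact_mod_cast hd
      have har : (1:ℝ) ≤ (a : ℝ) := by exact_mod_cast h1
      have hbr : (0:ℝ) ≤ (b : ℝ) := Nat.cast_nonneg b
      have hcr : (0:ℝ) ≤ (c : ℝ) := Nat.cast_nonneg c
      simp only [hs_def, Function.comp_apply, sigmaSB, Equiv.coe_fn_mk, tf]
      have n1 : ((a:ℝ) + c) ≠ 0 := by positivity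
      have n2 : ((b:ℝ) + d) ≠ 0 := by
        have : (0:ℝ) < (b:ℝ) + d := by linarith
        linarith
      have n3 : ((a:ℝ) + b) + ((c:ℝ) + d) ≠ 0 := by
        have : (0:ℝ) < ((a:ℝ) + b) + ((c:ℝ) + d) := by linarith
        linarith
      have n4 : ((d:ℝ) + c) + ((b:ℝ) + a) ≠ 0 := by
        have : (0:ℝ) < ((d:ℝ) + c) + ((b:ℝ) + a) := by linarith
        linarith
      have n5 : ((c:ℝ) + a) ≠ 0 := by positivity
      have n6 : ((a:ℝ) + b + c + d) ≠ 0 := by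
        have : (0:ℝ) < (a:ℝ) + b + c + d := by linarith
        linarith
      field_simp
      ring
    rw [heq] at hadd
    exact hadd
  have hSveq : 1/4 + Sv = Sv + Sv := htotal.unique hts
  have hfin : Sv = 1/4 := by linarith
  rw [hfin] at htotal
  have h12 : (1:ℝ)/4 + 1/4 = 1/2 := by norm_num
  rw [h12] at htotal
  exact htotal
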